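/- Let R be a commutative ring and let P ∈ R[x_1,…,x_n] be supported in tar''. Then the function Υ : Seg_w → R[x_1,…,x_n] can be chosen so that, in addition to satisfying Υ(b*) = P, Υ(b) supported in tar' for every b ∈ Seg_w, and X_α·Υ(b) = X_β·Υ(b′) whenever b, b′ ∈ Seg_w and δ ≤ α, β ≤ n satisfy e_α + b = e_β + b′, it also satisfies the following divisibility property: for every b ∈ Seg_w and every k with δ+1 ≤ k ≤ n−1, every element m of the support of Υ(b) satisfies m_k ≥ b_k (i.e. x_k^{b_k} divides Υ(b)). -/
import Mathlib


open MvPolynomial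
open scoped Classical

noncomputable section

/-- Total degree of an exponent vector `m : Fin n →₀ ℕ`. -/
def mdeg {n : ℕ} (m : Fin n →₀ ℕ) : ℕ := ∑ k, m k

/-- `m` is a δ-monomial: all exponents of variables strictly before `δ` vanish. -/
def IsDeltaMon {n : ℕ} (δ : Fin n) (m : Fin n →₀ ℕ) : Prop := ∀ k < δ, m k = 0

/-- `m` is a (δ+1)-monomial: all exponents of variables up to and including `δ` vanish. -/
def IsSuccDeltaMon {n : ℕ} (δ : Fin n) (m : Fin n →₀ ℕ) : Prop := ∀ k ≤ δ, m k = 0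

/-- The order ideal `O(n,r,s,δ,w)`. -/
def OIdeal {n : ℕ} (r s w : ℕ) (δ : Fin n) : Set (Fin n →₀ ℕ) :=
  {m | mdeg m < r ∨ (IsDeltaMon δ m ∧ r ≤ mdeg m ∧ mdeg m ≤ s ∧ m δ + w + 1 ≤ r)}

/-- The border `∂O`. -/
def Border {n : ℕ} (r s w : ℕ) (δ : Fin n) : Set (Fin n →₀ ℕ) :=
  {m | m ∉ OIdeal r s w δ ∧
    ∃ (α : Fin n) (t : Fin n →₀ ℕ), t ∈ OIdeal r s w δ ∧ m = Finsupp.single α 1 + t}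

/-- The set `S_D` of "diagonal" border monomials. -/
def SD {n : ℕ} (r s w : ℕ) (δ : Fin n) : Set (Fin n →₀ ℕ) :=
  {m | m ∈ Border r s w δ ∧ IsDeltaMon δ m ∧ r + 1 ≤ mdeg m ∧ mdeg m ≤ s}

/-- The set `S_L` of "leading" monomials. -/
def SL {n : ℕ} (r w : ℕ) (δ : Fin n) : Set (Fin n →₀ ℕ) :=
  {m | IsDeltaMon δ m ∧ mdeg m = r ∧ r - w ≤ m δ}

/-- `tar = {m ∈ O : r ≤ deg m ≤ s}`. -/
def Tar {n : ℕ} (r s w : ℕ) (δ : Fin n) : Set (Fin n →₀ ℕ) :=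
  {m | m ∈ OIdeal r s w δ ∧ r ≤ mdeg m ∧ mdeg m ≤ s}

/-- `tar' = {m ∈ tar : deg m ≤ s−1}`. -/
def Tar' {n : ℕ} (r s w : ℕ) (δ : Fin n) : Set (Fin n →₀ ℕ) :=
  {m | m ∈ Tar r s w δ ∧ mdeg m ≤ s - 1}

/-- `tar'' = {m ∈ tar' : m_{δ+1} ≥ w}` (`δ'` is the index of `x_{δ+1}`). -/
def Tar'' {n : ℕ} (r s w : ℕ) (δ δ' : Fin n) : Set (Fin n →₀ ℕ) :=
  {m | m ∈ Tar' r s w δ ∧ w ≤ m δ'}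

/-- `trailmon = {m ∈ O : deg m = s}`. -/
def Trail {n : ℕ} (r s w : ℕ) (δ : Fin n) : Set (Fin n →₀ ℕ) :=
  {m | m ∈ OIdeal r s w δ ∧ mdeg m = s}

/-- `leadmon = {m : deg m = r, m ∉ O}`. -/
def Lead {n : ℕ} (r s w : ℕ) (δ : Fin n) : Set (Fin n →₀ ℕ) :=
  {m | mdeg m = r ∧ m ∉ OIdeal r s w δ}

/-- `Seg_a`: δ-monomials of degree `r` with `x_δ`-exponent `r − a`. -/
def SegA {n : ℕ} (r a : ℕ) (δ : Fin n) : Set (Fin n →₀ ℕ) :=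
  {b | IsDeltaMon δ b ∧ mdeg b = r ∧ b δ = r - a}

/-- The monomial `x_δ^{r−a}·x_{δ+1}^{a}` (`δ'` is the index of `x_{δ+1}`). -/
def bstar {n : ℕ} (r a : ℕ) (δ δ' : Fin n) : Fin n →₀ ℕ :=
  Finsupp.single δ (r - a) + Finsupp.single δ' a

/-- Truncation: sum of homogeneous components of degree `0` through `s`. -/
def truncLE {n : ℕ} {R : Type*} [CommRing R] (s : ℕ) (P : MvPolynomial (Fin n) R) :
    MvPolynomial (Fin n) R :=
  ∑ m ∈ P.support.filter (fun m => mdeg m ≤ s), monomial m (coeff m P)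

/-- `optX R none = 1 = X₀`, `optX R (some a) = X a`. -/
def optX {n : ℕ} (R : Type*) [CommRing R] : Option (Fin n) → MvPolynomial (Fin n) R
  | none => 1
  | some a => X a

/-- `optE none = 0 = e₀`, `optE (some a) = e_a`. -/
def optE {n : ℕ} : Option (Fin n) → (Fin n →₀ ℕ)
  | none => 0
  | some a => Finsupp.single a 1

/-- The reduction operator determined by a target function `UpsD` on `S_D`. -/
def redFn {n : ℕ} {R : Type*} [CommRing R] (r s w : ℕ) (δ : Fin n)
    (UpsD : (Fin n →₀ ℕ) → MvPolynomial (Fin n) R) (P : MvPolynomial (Fin n) R) :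
    MvPolynomial (Fin n) R :=
  (∑ m ∈ P.support.filter (fun m => m ∈ Tar r s w δ), monomial m (coeff m P)) -
  ∑ m ∈ P.support.filter (fun m => m ∈ SD r s w δ), coeff m P • UpsD m

/-- The polynomial ring over `K` in the distinguished indeterminates `C_{(t,b)}`
and the modification indeterminates `θ_m`. -/
abbrev BigA (K : Type*) [Field K] {n : ℕ} (r s w : ℕ) (δ δ' : Fin n) : Type _ :=
  MvPolynomial ((↥(Trail r s w δ) × ↥(Lead r s w δ)) ⊕ ↥(Tar'' r s w δ δ')) K

/-- The generic linear combination `N_b = Σ_t C_{(t,b)}·X^t` for `b ∈ leadmon`, `0` otherwise. -/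
def NB (K : Type*) [Field K] {n : ℕ} (r s w : ℕ) (δ δ' : Fin n) (b : Fin n →₀ ℕ) :
    MvPolynomial (Fin n) (BigA K r s w δ δ') :=
  if hb : b ∈ Lead r s w δ then
    ∑ᶠ t : ↥(Trail r s w δ),
      monomial (t : Fin n →₀ ℕ)
        (MvPolynomial.X (Sum.inl (t, ⟨b, hb⟩)) : BigA K r s w δ δ')
  else 0


lemma mdeg_add' {n : ℕ} (a b : Fin n →₀ ℕ) : mdeg (a + b) = mdeg a + mdeg b := by
  simp [mdeg, Finset.sum_add_distrib]

lemma mdeg_single' {n : ℕ} (a : Fin n) (c : ℕ) : mdeg (Finsupp.single a c) = c := by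
  simp [mdeg, Finsupp.single_apply]

lemma mdeg_tsub_add' {n : ℕ} {a c : Fin n →₀ ℕ} (h : c ≤ a) :
    mdeg (a - c) + mdeg c = mdeg a := by
  rw [mdeg, mdeg, mdeg, ← Finset.sum_add_distrib]
  refine Finset.sum_congr rfl fun k _ => ?_
  have := (Finsupp.le_def.mp h) k
  simp only [Finsupp.tsub_apply]
  omega

/-- the Step-1 target assignment can be chosen with the additional
divisibility property `x_k^{b_k} ∣ Υ(b)` for `δ+1 ≤ k ≤ n−1` (1-based). -/
theorem statement17 (R : Type*) [CommRing R] (n r s w : ℕ) (δ : Fin n)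
    (hn : 2 ≤ n) (hr : 2 ≤ r) (hrs : r < s) (hδ : (δ : ℕ) + 1 < n) (hw : w + 1 ≤ r)
    (P : MvPolynomial (Fin n) R)
    (hP : (P.support : Set (Fin n →₀ ℕ)) ⊆ Tar'' r s w δ ⟨(δ : ℕ) + 1, hδ⟩) :
    ∃ Ups : (Fin n →₀ ℕ) → MvPolynomial (Fin n) R,
      Ups (bstar r w δ ⟨(δ : ℕ) + 1, hδ⟩) = P ∧
      (∀ b ∈ SegA r w δ, ((Ups b).support : Set (Fin n →₀ ℕ)) ⊆ Tar' r s w δ) ∧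
      (∀ b ∈ SegA r w δ, ∀ b' ∈ SegA r w δ, ∀ α β : Fin n, δ ≤ α → δ ≤ β →
        Finsupp.single α 1 + b = Finsupp.single β 1 + b' →
        X α * Ups b = X β * Ups b') ∧
      (∀ b ∈ SegA r w δ, ∀ k : Fin n, δ < k → (k : ℕ) + 1 < n →
        ∀ m ∈ (Ups b).support, b k ≤ m k) := by
  set δ' : Fin n := ⟨(δ : ℕ) + 1, hδ⟩ with hδ'def
  have hδlt : δ < δ' := by simp [hδ'def, Fin.lt_def]
  have hδne : δ ≠ δ' := ne_of_lt hδlt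
  set cδ : Fin n →₀ ℕ := Finsupp.single δ (r - w) with hcδ
  set ce : Fin n →₀ ℕ := Finsupp.single δ' w with hce
  -- definition of the assignment
  set g : (Fin n →₀ ℕ) → (Fin n →₀ ℕ) → (Fin n →₀ ℕ) :=
    fun b m => (b - cδ) + (m - ce) with hg
  set Ups : (Fin n →₀ ℕ) → MvPolynomial (Fin n) R :=
    fun b => ∑ m ∈ P.support, monomial (g b m) (coeff m P) with hUps
  -- facts about elements of the support of P
  have hPmem : ∀ m ∈ P.support, w ≤ m δ' ∧ IsDeltaMon δ m ∧ r ≤ mdeg m ∧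
      mdeg m ≤ s - 1 ∧ m δ + w + 1 ≤ r := by
    intro m hm
    obtain ⟨⟨⟨hO, hr1, hs1⟩, hs2⟩, hw2⟩ := hP hm
    rcases hO with h | ⟨h1, h2, h3, h4⟩
    · omega
    · exact ⟨hw2, h1, hr1, hs2, h4⟩
  -- membership of g b m in Tar' and the componentwise bound
  have key : ∀ b ∈ SegA r w δ, ∀ m ∈ P.support,
      g b m ∈ Tar' r s w δ ∧ ∀ k : Fin n, δ < k → b k ≤ g b m k := by
    intro b hb m hm
    obtain ⟨hbδ, hbdeg, hbval⟩ := hb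
    obtain ⟨hmw, hmδ, hmr, hms, hmval⟩ := hPmem m hm
    have hcb : cδ ≤ b := by
      rw [hcδ, Finsupp.single_le_iff, hbval]
    have hcm : ce ≤ m := by
      rw [hce, Finsupp.single_le_iff]; exact hmw
    have happ : ∀ k : Fin n, (g b m) k =
        (b k - (Finsupp.single δ (r - w)) k) + (m k - (Finsupp.single δ' w) k) := by
      intro k
      simp [hg, hcδ, hce, Finsupp.tsub_apply]
    have hdeg : mdeg (g b m) = mdeg m := by
      have h0 : mdeg (g b m) = mdeg (b - cδ) + mdeg (m - ce) := mdeg_add' _ _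
      have h1 := mdeg_tsub_add' hcb
      have h2 := mdeg_tsub_add' hcm
      have h3 : mdeg cδ = r - w := by rw [hcδ]; exact mdeg_single' _ _
      have h4 : mdeg ce = w := by rw [hce]; exact mdeg_single' _ _
      omega
    have hvδ : (g b m) δ = m δ := by
      rw [happ δ]
      rw [Finsupp.single_apply, Finsupp.single_apply, hbval]
      have : ¬ (δ' = δ) := fun h => hδne h.symm
      simp [this]
    refine ⟨⟨⟨?_, ?_, ?_⟩, ?_⟩, ?_⟩
    · right
      refine ⟨?_, by omega, by omega, by omega⟩
      intro k hk
      rw [happ k]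
      have h1 : b k = 0 := hbδ k hk
      have h2 : m k = 0 := hmδ k hk
      omega
    · omega
    · omega
    · omega
    · intro k hk
      rw [happ k]
      have h1 : (Finsupp.single δ (r - w)) k = 0 := by
        rw [Finsupp.single_apply]
        simp [ne_of_lt hk]
      omega
  -- every exponent of Ups b comes from g
  have hsupp : ∀ b, ∀ u ∈ (Ups b).support, ∃ m ∈ P.support, u = g b m := by
    intro b u hu
    rw [MvPolynomial.mem_support_iff] at hu
    by_contra hcon
    push_neg at hcon
    apply hu
    rw [hUps]
    simp only [MvPolynomial.coeff_sum, MvPolynomial.coeff_monomial]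
    apply Finset.sum_eq_zero
    intro m hm
    have := hcon m hm
    rw [if_neg (fun h => this h.symm)]
  refine ⟨Ups, ?_, ?_, ?_, ?_⟩
  · -- Ups b* = P
    have hbst : bstar r w δ δ' - cδ = ce := by
      ext k
      rw [Finsupp.tsub_apply]
      simp only [bstar, Finsupp.add_apply, hcδ, hce, Finsupp.single_apply]
      rcases eq_or_ne δ k with h1 | h1
      · have h2 : δ' ≠ k := fun h2 => hδne (h1.trans h2.symm)
        simp [h1, h2]
      · simp [h1]
    have hgm : ∀ m ∈ P.support, g (bstar r w δ δ') m = m := by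
      intro m hm
      have hcm : ce ≤ m := by
        rw [hce, Finsupp.single_le_iff]; exact (hPmem m hm).1
      show bstar r w δ δ' - cδ + (m - ce) = m
      rw [hbst, add_comm]
      exact tsub_add_cancel_of_le hcm
    rw [hUps]
    simp only
    rw [Finset.sum_congr rfl fun m hm => by rw [hgm m hm]]
    exact P.support_sum_monomial_coeff
  · -- support in Tar'
    intro b hb u hu
    obtain ⟨m, hm, rfl⟩ := hsupp b u hu
    exact (key b hb m hm).1
  · -- compatibility
    intro b hb b' hb' α β hα hβ heq
    rw [hUps]
    simp only [MvPolynomial.X, Finset.mul_sum, MvPolynomial.monomial_mul, one_mul]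
    refine Finset.sum_congr rfl fun m hm => ?_
    have hbval := hb.2.2
    have hb'val := hb'.2.2
    have hptw : ∀ k : Fin n, (Finsupp.single α 1) k + b k =
        (Finsupp.single β 1) k + b' k := by
      intro k
      have := congrArg (fun f : Fin n →₀ ℕ => f k) heq
      simpa [Finsupp.add_apply] using this
    have hexp : Finsupp.single α 1 + g b m = Finsupp.single β 1 + g b' m := by
      ext k
      simp only [hg, Finsupp.add_apply, Finsupp.tsub_apply, hcδ]
      have h1 := hptw k
      have h2 : (Finsupp.single δ (r - w)) k ≤ b k := by
        rw [Finsupp.single_apply]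
        split_ifs with h
        · rw [← h, hbval]
        · omega
      have h3 : (Finsupp.single δ (r - w)) k ≤ b' k := by
        rw [Finsupp.single_apply]
        split_ifs with h
        · rw [← h, hb'val]
        · omega
      omega
    rw [hexp]
  · -- divisibility
    intro b hb k hk hkn u hu
    obtain ⟨m, hm, rfl⟩ := hsupp b u hu
    exact (key b hb m hm).2 k hk
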